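/- Let E be a real normed vector space, C ⊆ E a nonempty compact convex set, f : E → ℝ, Δ : E → E → ℝ, C_f ≥ 0 such that Δ satisfies the curvature bound C_f for f on C, and ε ≥ 0. Let a : ℕ → ℝ with a_t > 0 for all t, A_t = ∑_{i=0}^t a_i, and α_t = a_t/A_t. Let x, v : ℕ → E with x_0 ∈ C, v_t ∈ C, and x_{t+1} = (1 − α_t)·x_t + α_t·v_t for all t. Define L_t = (1/A_t)·∑_{i=0}^t a_i·[ f(x_i) + Δ x_i (α_i·(v_i − x_i))/α_i − (α_i/2)·C_f·(1+ε) ] and G_t = f(x_{t+1}) − L_t. Then A_0·G_0 ≤ (a_0²/A_0)·C_f·(1+ε), and for all t ≥ 1, A_t·G_t − A_{t−1}·G_{t−1} ≤ (a_t²/A_t)·C_f·(1+ε). -/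

import Mathlib

/-!
Since `α t = a t / A t`, the weight of the model term in `A t * L t` is `a t / α t = A t`, so
`A t * G t - A (t-1) * G (t-1)` equals `A t` times the error of the model `Δ` along the step
`x t ↦ x (t+1)`, plus `a t * α t / 2 * Cf * (1 + ε)`. The curvature bound controls the former by
`A t * α t ^ 2 / 2 * Cf = a t * α t / 2 * Cf`, and `a t * α t = a t ^ 2 / A t`. For `t = 0` the same
computation applies with `A (-1) = 0`, because `A 0 = a 0`.
-/

open Finset

def CurvatureBound {E : Type*} [AddCommGroup E] [Module ℝ E]
    (C : Set E) (f : E → ℝ) (Δ : E → E → ℝ) (Cf : ℝ) : Prop :=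
  ∀ x ∈ C, ∀ v ∈ C, ∀ α ∈ Set.Ioc (0:ℝ) 1,
    |f (x + α • (v - x)) - f x - Δ x (α • (v - x))| ≤ α ^ 2 / 2 * Cf

theorem CurvatureBound.le_add_model {E : Type*} [AddCommGroup E] [Module ℝ E]
    {C : Set E} {f : E → ℝ} {Δ : E → E → ℝ} {Cf : ℝ} (h : CurvatureBound C f Δ Cf)
    {x v : E} (hx : x ∈ C) (hv : v ∈ C) {α : ℝ} (hα : α ∈ Set.Ioc 0 1) :
    f (x + α • (v - x)) ≤ f x + Δ x (α • (v - x)) + α ^ 2 / 2 * Cf := by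
  linarith [le_of_abs_le (h x hx v hv α hα)]

theorem Convex.forall_mem_of_step_mem {E : Type*} [AddCommGroup E] [Module ℝ E]
    {C : Set E} (hC : Convex ℝ C) {x v : ℕ → E} {α : ℕ → ℝ}
    (hx0 : x 0 ∈ C) (hv : ∀ t, v t ∈ C) (hα : ∀ t, α t ∈ Set.Icc 0 1)
    (hstep : ∀ t, x (t + 1) = (1 - α t) • x t + α t • v t) (t : ℕ) : x t ∈ C := by
  induction t with
  | zero => exact hx0
  | succ s ih =>
    rw [hstep]
    exact hC ih (hv s) (by linarith [(hα s).2]) (hα s).1 (by ring)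

theorem div_partialSum_mem_Ioc {a : ℕ → ℝ} (ha : ∀ t, 0 < a t) (t : ℕ) :
    a t / ∑ i ∈ range (t + 1), a i ∈ Set.Ioc 0 1 := by
  have hpos : 0 < ∑ i ∈ range (t + 1), a i :=
    sum_pos (fun i _ => ha i) nonempty_range_add_one
  refine ⟨div_pos (ha t) hpos, div_le_one_of_le₀ ?_ hpos.le⟩
  exact single_le_sum (fun i _ => (ha i).le) (self_mem_range_succ t)

theorem weighted_gap_increment_le {A a α f₀ f₁ D Cf ε : ℝ} (hA : 0 < A) (ha : 0 < a)
    (hα : α = a / A) (hCf : 0 ≤ Cf) (hε : 0 ≤ ε) (hdesc : f₁ ≤ f₀ + D + α ^ 2 / 2 * Cf) :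
    A * f₁ - (A - a) * f₀ - a * (f₀ + D / α - α / 2 * Cf * (1 + ε))
      ≤ a ^ 2 / A * Cf * (1 + ε) := by
  subst hα
  have hmodel : a * (D / (a / A)) = A * D := by field_simp
  have hcurv : A * ((a / A) ^ 2 / 2 * Cf) = a ^ 2 / A / 2 * Cf := by field_simp
  have hslack : 0 ≤ a ^ 2 / A * Cf * ε := by positivity
  calc A * f₁ - (A - a) * f₀ - a * (f₀ + D / (a / A) - a / A / 2 * Cf * (1 + ε))
      = A * (f₁ - f₀ - D) + a ^ 2 / A / 2 * Cf * (1 + ε) := by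
        rw [mul_sub, mul_add, hmodel]; ring
    _ ≤ A * ((a / A) ^ 2 / 2 * Cf) + a ^ 2 / A / 2 * Cf * (1 + ε) := by
        gcongr; linarith
    _ ≤ a ^ 2 / A * Cf * (1 + ε) := by rw [hcurv]; linarith

theorem adgt_one_step_vanilla_general
    {E : Type*} [NormedAddCommGroup E] [NormedSpace ℝ E]
    (C : Set E) (hCconv : Convex ℝ C)
    (f : E → ℝ)
    (Δ : E → E → ℝ) (Cf : ℝ) (hCf : 0 ≤ Cf)
    (hcurv : ∀ x ∈ C, ∀ v ∈ C, ∀ α ∈ Set.Ioc (0:ℝ) 1,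
      |f (x + α • (v - x)) - f x - Δ x (α • (v - x))| ≤ α ^ 2 / 2 * Cf)
    (ε : ℝ) (hε : 0 ≤ ε)
    (a A α : ℕ → ℝ) (ha : ∀ t, 0 < a t)
    (hA : ∀ t : ℕ, A t = ∑ i ∈ Finset.range (t + 1), a i)
    (hα : ∀ t : ℕ, α t = a t / A t)
    (x v : ℕ → E) (hx0 : x 0 ∈ C) (hv : ∀ t, v t ∈ C)
    (hstep : ∀ t : ℕ, x (t + 1) = (1 - α t) • x t + α t • v t)
    (L G : ℕ → ℝ)
    (hL : ∀ t : ℕ, L t = (1 / A t) * ∑ i ∈ Finset.range (t + 1),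
      a i * (f (x i) + Δ (x i) (α i • (v i - x i)) / α i - α i / 2 * Cf * (1 + ε)))
    (hG : ∀ t : ℕ, G t = f (x (t + 1)) - L t) :
    A 0 * G 0 ≤ a 0 ^ 2 / A 0 * Cf * (1 + ε) ∧
      ∀ t : ℕ, 1 ≤ t →
        A t * G t - A (t - 1) * G (t - 1) ≤ a t ^ 2 / A t * Cf * (1 + ε) := by
  have hαIoc (t : ℕ) : α t ∈ Set.Ioc 0 1 := by
    rw [hα, hA]; exact div_partialSum_mem_Ioc ha t
  have hApos (t : ℕ) : 0 < A t := by
    rw [hA]; exact sum_pos (fun i _ => ha i) nonempty_range_add_one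
  have hxC : ∀ t, x t ∈ C :=
    hCconv.forall_mem_of_step_mem hx0 hv (fun t => Set.Ioc_subset_Icc_self (hαIoc t)) hstep
  have hdesc (t : ℕ) :
      f (x (t + 1)) ≤ f (x t) + Δ (x t) (α t • (v t - x t)) + α t ^ 2 / 2 * Cf := by
    have hmove : x (t + 1) = x t + α t • (v t - x t) := by rw [hstep]; module
    rw [hmove]
    exact CurvatureBound.le_add_model hcurv (hxC t) (hv t) (hαIoc t)
  have hAG (t : ℕ) : A t * G t = A t * f (x (t + 1)) - ∑ i ∈ range (t + 1),
      a i * (f (x i) + Δ (x i) (α i • (v i - x i)) / α i - α i / 2 * Cf * (1 + ε)) := by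
    rw [hG, hL, mul_sub, ← mul_assoc, mul_one_div_cancel (hApos t).ne', one_mul]
  constructor
  · have hA0 : A 0 - a 0 = 0 := by simp [hA]
    have := weighted_gap_increment_le (hApos 0) (ha 0) (hα 0) hCf hε (hdesc 0)
    rw [hA0, zero_mul, sub_zero] at this
    rw [hAG, sum_range_one]
    exact this
  · intro t ht
    obtain ⟨s, rfl⟩ : ∃ s, t = s + 1 := ⟨t - 1, by omega⟩
    have hAs : A (s + 1) - a (s + 1) = A s := by rw [hA, hA, sum_range_succ _ (s + 1)]; ring
    have := weighted_gap_increment_le (hApos (s + 1)) (ha (s + 1)) (hα (s + 1)) hCf hε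
      (hdesc (s + 1))
    rw [hAs] at this
    rw [Nat.add_sub_cancel, hAG, hAG, sum_range_succ _ (s + 1)]
    linarith

/-- ADGT one-step inequality for relaxed vanilla ASFW: with weights `a t > 0`,
`A t = ∑_{i=0}^t a i`, `α t = a t / A t`, lower bound estimate `L` and gap
`G t = f (x (t+1)) - L t`, one has `A 0 * G 0 ≤ (a 0² / A 0) * Cf * (1+ε)` and
`A t * G t - A (t-1) * G (t-1) ≤ (a t² / A t) * Cf * (1+ε)` for `t ≥ 1`. -/
theorem adgt_one_step_vanilla
    {E : Type*} [NormedAddCommGroup E] [NormedSpace ℝ E]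
    (C : Set E) (hCne : C.Nonempty) (hCcomp : IsCompact C) (hCconv : Convex ℝ C)
    (f : E → ℝ)
    (Δ : E → E → ℝ) (Cf : ℝ) (hCf : 0 ≤ Cf)
    (hcurv : ∀ x ∈ C, ∀ v ∈ C, ∀ α ∈ Set.Ioc (0:ℝ) 1,
      |f (x + α • (v - x)) - f x - Δ x (α • (v - x))| ≤ α ^ 2 / 2 * Cf)
    (ε : ℝ) (hε : 0 ≤ ε)
    (a A α : ℕ → ℝ) (ha : ∀ t, 0 < a t)
    (hA : ∀ t : ℕ, A t = ∑ i ∈ Finset.range (t + 1), a i)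
    (hα : ∀ t : ℕ, α t = a t / A t)
    (x v : ℕ → E) (hx0 : x 0 ∈ C) (hv : ∀ t, v t ∈ C)
    (hstep : ∀ t : ℕ, x (t + 1) = (1 - α t) • x t + α t • v t)
    (L G : ℕ → ℝ)
    (hL : ∀ t : ℕ, L t = (1 / A t) * ∑ i ∈ Finset.range (t + 1),
      a i * (f (x i) + Δ (x i) (α i • (v i - x i)) / α i - α i / 2 * Cf * (1 + ε)))
    (hG : ∀ t : ℕ, G t = f (x (t + 1)) - L t) :
    A 0 * G 0 ≤ a 0 ^ 2 / A 0 * Cf * (1 + ε) ∧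
      ∀ t : ℕ, 1 ≤ t →
        A t * G t - A (t - 1) * G (t - 1) ≤ a t ^ 2 / A t * Cf * (1 + ε) :=
  adgt_one_step_vanilla_general C hCconv f Δ Cf hCf hcurv ε hε a A α ha hA hα x v hx0 hv hstep L G
    hL hG
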